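/- Let $A$ be an abelian variety over a field $K$ of characteristic $p > 0$ such that the Verschiebung isogeny $\mathrm{Ver}_{A/K} : A^{(p)} \to A$ is étale. Then every $K$-point $P_0 \in A(K)$ that lifts through all iterated Verschiebungs (i.e., there exist $P_\ell \in A^{(p^\ell)}(K)$ with $\mathrm{Ver}(P_\ell) = P_{\ell-1}$ for all $\ell \geq 1$) is $p^\infty$-divisible in $A(K^{\mathrm{perf}})$, where $K^{\mathrm{perf}}$ is the perfection of $K$. -/
import Mathlib


/-- (Abstract formalization: Mathlib has no abelian varieties.)
`G ℓ = A^{(p^ℓ)}(K^perf)`; `Frob ℓ` is the relative Frobenius on `K^perf`-points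
(bijective since `K^perf` is perfect), `Ver ℓ` the Verschiebung, and
`Ver ∘ Frob = [p]`. If `P₀` lifts through all iterated Verschiebungs then `P₀` is
`p^∞`-divisible in `A(K^perf) = G 0`. -/
theorem stmt12 (p : ℕ) (hp : p.Prime) (G : ℕ → Type*) [∀ ℓ, AddCommGroup (G ℓ)]
    (Frob : ∀ ℓ, G ℓ →+ G (ℓ + 1)) (Ver : ∀ ℓ, G (ℓ + 1) →+ G ℓ)
    (hFrobBij : ∀ ℓ, Function.Bijective (Frob ℓ))
    (hpVF : ∀ ℓ (x : G ℓ), Ver ℓ (Frob ℓ x) = p • x)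
    (P : ∀ ℓ, G ℓ) (hP : ∀ ℓ, Ver ℓ (P (ℓ + 1)) = P ℓ) :
    ∀ n : ℕ, ∃ y : G 0, p ^ n • y = P 0 := by
  intro n
  induction n generalizing P with
  | zero => exact ⟨P 0, by simp⟩
  | succ n ih =>
    choose Q hQ using fun ℓ => (hFrobBij ℓ).2 (P (ℓ + 1))
    have hQV : ∀ ℓ, Ver ℓ (Q (ℓ + 1)) = Q ℓ := by
      intro ℓ
      apply (hFrobBij ℓ).1
      have h1 : Frob ℓ (Ver ℓ (Q (ℓ + 1))) = p • Q (ℓ + 1) := by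
        obtain ⟨w, hw⟩ := (hFrobBij ℓ).2 (Q (ℓ + 1))
        rw [← hw, hpVF, map_nsmul]
      rw [h1, hQ ℓ, ← hP (ℓ + 1), ← hQ (ℓ + 1), hpVF]
    obtain ⟨y, hy⟩ := ih Q hQV
    refine ⟨y, ?_⟩
    rw [pow_succ', mul_smul, hy, ← hpVF 0 (Q 0), hQ 0, hP 0]
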